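/- arXiv:2109.13728 — 2 statements merged into one kernel-verified Lean document; each statement's English description precedes it below -/
import Mathlib

section
/- Let μ, m, ν be probability measures on a measurable space with ν ≪ m and m ≪ μ. Set g = dm/dμ and h = dν/dm, and assume ∫ g dm < ∞ and Ent(ν|m) = ∫ h log h dm < ∞. Then for every measurable function f with ε ≤ f ≤ K for some constants 0 < ε ≤ K < ∞, one has ∫ log f dν ≤ log ∫ f dμ + log ∫ g dm + 2·Ent(ν|m). -/
/-!
Apply the Donsker–Varadhan inequality `∫ φ dν ≤ Ent(ν|m) + log ∫ e^φ dm` to `φ = log √f`, so that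
`∫ log f dν ≤ 2 Ent(ν|m) + 2 log ∫ √f dm`. Then Cauchy–Schwarz in `L²(μ)` gives
`(∫ √f dm)² = (∫ g √f dμ)² ≤ ∫ f dμ · ∫ g² dμ`, and `∫ g² dμ = ∫ g dm`.
-/

open MeasureTheory Real

theorem Real.two_mul_log_le_log_add_log_of_sq_le_mul {a b c : ℝ} (ha : 0 < a)
    (h : a ^ 2 ≤ b * c) : 2 * log a ≤ log b + log c := by
  have hbc : 0 < b * c := lt_of_lt_of_le (by positivity) h
  rw [← log_mul (left_ne_zero_of_mul hbc.ne') (right_ne_zero_of_mul hbc.ne')]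
  calc 2 * log a = log (a ^ 2) := by rw [log_pow]; norm_num
    _ ≤ log (b * c) := log_le_log (by positivity) h

namespace MeasureTheory

variable {α : Type*} [MeasurableSpace α]

theorem sq_integral_mul_le_integral_sq_mul_integral_sq {μ : Measure α} {f g : α → ℝ}
    (hf : MemLp f 2 μ) (hg : MemLp g 2 μ) :
    (∫ x, f x * g x ∂μ) ^ 2 ≤ (∫ x, f x ^ 2 ∂μ) * ∫ x, g x ^ 2 ∂μ := by
  have inner_toLp {u v : α → ℝ} (hu : MemLp u 2 μ) (hv : MemLp v 2 μ) :
      inner ℝ (hu.toLp u) (hv.toLp v) = ∫ x, u x * v x ∂μ := by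
    rw [L2.inner_def]
    refine integral_congr_ae ?_
    filter_upwards [hu.coeFn_toLp, hv.coeFn_toLp] with x hux hvx
    simp [hux, hvx, mul_comm]
  have := real_inner_mul_inner_self_le (hf.toLp f) (hg.toLp g)
  rw [inner_toLp, inner_toLp, inner_toLp] at this
  simpa only [sq] using this

theorem sq_integral_le_integral_sq_mul_integral_rnDeriv {μ m : Measure α} [SigmaFinite μ]
    [SigmaFinite m] (hmμ : m ≪ μ) {F : α → ℝ} (hF : MemLp F 2 μ)
    (hg : Integrable (fun x ↦ (m.rnDeriv μ x).toReal) m) :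
    (∫ x, F x ∂m) ^ 2 ≤ (∫ x, F x ^ 2 ∂μ) * ∫ x, (m.rnDeriv μ x).toReal ∂m := by
  have hg_memLp : MemLp (fun x ↦ (m.rnDeriv μ x).toReal) 2 μ :=
    (memLp_two_iff_integrable_sq
      (Measure.measurable_rnDeriv m μ).ennreal_toReal.aestronglyMeasurable).mpr
      (by simpa [sq] using (integrable_toReal_rnDeriv_mul_iff hmμ).mpr hg)
  rw [← integral_toReal_rnDeriv_mul hmμ, ← integral_toReal_rnDeriv_mul hmμ, mul_comm]
  simpa [sq] using sq_integral_mul_le_integral_sq_mul_integral_sq hg_memLp hF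

theorem integral_le_integral_llr_add_log_integral_exp {μ ν : Measure α} [SigmaFinite μ]
    [IsProbabilityMeasure ν] (hνμ : ν ≪ μ) (h_int : Integrable (llr ν μ) ν) {φ : α → ℝ}
    (hφ : Integrable φ ν) (hexp : Integrable (fun x ↦ exp (φ x)) μ) :
    ∫ x, φ x ∂ν ≤ ∫ x, llr ν μ x ∂ν + log (∫ x, exp (φ x) ∂μ) := by
  have : NeZero μ :=
    ⟨fun h ↦ IsProbabilityMeasure.ne_zero ν (Measure.absolutelyContinuous_zero_iff.mp (h ▸ hνμ))⟩
  have := isProbabilityMeasure_tilted hexp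
  -- Gibbs' inequality `0 ≤ Ent(ν | μ.tilted φ)`, and this entropy is exactly the gap.
  have gibbs := InformationTheory.integral_llr_add_sub_measure_univ_nonneg
    (hνμ.trans (absolutelyContinuous_tilted hexp)) (integrable_llr_tilted_right hνμ hφ h_int hexp)
  rw [integral_llr_tilted_right hνμ hφ hexp h_int] at gibbs
  simp only [probReal_univ] at gibbs
  linarith

end MeasureTheory

theorem three_measure_log_harnack_general
    {α : Type*} [MeasurableSpace α] (μ m ν : Measure α)
    [IsProbabilityMeasure μ] [IsProbabilityMeasure m] [IsProbabilityMeasure ν]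
    (hνm : ν ≪ m) (hmμ : m ≪ μ)
    (g : α → ℝ) (hg : g = fun x => (m.rnDeriv μ x).toReal)
    (hgint : Integrable g m)
    (hent : Integrable (llr ν m) ν)
    (f : α → ℝ) (hf : Measurable f)
    (ε K : ℝ) (hε : 0 < ε)
    (hfl : ∀ x, ε ≤ f x) (hfu : ∀ x, f x ≤ K) :
    ∫ x, Real.log (f x) ∂ν
      ≤ Real.log (∫ x, f x ∂μ) + Real.log (∫ x, g x ∂m)
        + 2 * ∫ x, llr ν m x ∂ν := by
  subst hg
  have hf_pos x : 0 < f x := hε.trans_le (hfl x)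
  have hsqrt_le x : ‖√(f x)‖ ≤ √K := by
    rw [norm_of_nonneg (sqrt_nonneg _)]
    exact sqrt_le_sqrt (hfu x)
  have hsqrt_memLp : MemLp (fun x ↦ √(f x)) 2 μ :=
    (memLp_top_of_bound hf.sqrt.aestronglyMeasurable _ (.of_forall hsqrt_le)).mono_exponent le_top
  have hlog_int : Integrable (fun x ↦ log √(f x)) ν :=
    .of_bound hf.sqrt.log.aestronglyMeasurable (max |log √ε| |log √K|) (.of_forall fun x ↦
      abs_le_max_abs_abs (log_le_log (sqrt_pos.2 hε) (sqrt_le_sqrt (hfl x)))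
        (log_le_log (sqrt_pos.2 (hf_pos x)) (sqrt_le_sqrt (hfu x))))
  have hexp_int : Integrable (fun x ↦ exp (log √(f x))) m := by
    simp_rw [exp_log (sqrt_pos.2 (hf_pos _))]
    exact .of_bound hf.sqrt.aestronglyMeasurable _ (.of_forall hsqrt_le)
  have h_dv := integral_le_integral_llr_add_log_integral_exp hνm hent hlog_int hexp_int
  have h_pos := integral_exp_pos hexp_int
  simp_rw [exp_log (sqrt_pos.2 (hf_pos _))] at h_dv h_pos
  have h_cs := sq_integral_le_integral_sq_mul_integral_rnDeriv hmμ hsqrt_memLp hgint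
  simp_rw [sq_sqrt (hf_pos _).le] at h_cs
  have h_log := two_mul_log_le_log_add_log_of_sq_le_mul h_pos h_cs
  have h_half : ∫ x, log (f x) ∂ν = 2 * ∫ x, log √(f x) ∂ν := by
    simp_rw [log_sqrt (hf_pos _).le, integral_div]
    ring
  linarith

/-- Three-measure entropy inequality (algebraic core of the log-Harnack
inequality): if `ν ≪ m ≪ μ` are probability measures, `g = dm/dμ` with
`∫ g dm < ∞` and `Ent(ν|m) = ∫ log(dν/dm) dν < ∞`, then for every measurable `f`
with `0 < ε ≤ f ≤ K < ∞`,
`∫ log f dν ≤ log ∫ f dμ + log ∫ g dm + 2 Ent(ν|m)`. -/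
theorem three_measure_log_harnack
    {α : Type*} [MeasurableSpace α] (μ m ν : Measure α)
    [IsProbabilityMeasure μ] [IsProbabilityMeasure m] [IsProbabilityMeasure ν]
    (hνm : ν ≪ m) (hmμ : m ≪ μ)
    (g : α → ℝ) (hg : g = fun x => (m.rnDeriv μ x).toReal)
    (hgint : Integrable g m)
    (hent : Integrable (llr ν m) ν)
    (f : α → ℝ) (hf : Measurable f)
    (ε K : ℝ) (hε : 0 < ε) (hεK : ε ≤ K)
    (hfl : ∀ x, ε ≤ f x) (hfu : ∀ x, f x ≤ K) :
    ∫ x, Real.log (f x) ∂ν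
      ≤ Real.log (∫ x, f x ∂μ) + Real.log (∫ x, g x ∂m)
        + 2 * ∫ x, llr ν m x ∂ν :=
  three_measure_log_harnack_general μ m ν hνm hmμ g hg hgint hent f hf ε K hε hfl hfu
end

section
/- Let μ, m, ν be probability measures on a measurable space with ν ≪ m and m ≪ μ, and set g = dm/dμ with ∫ g dm < ∞. Then Ent(ν|μ) ≤ log ∫ g dm + 2·Ent(ν|m), where both sides may equal +∞. -/
open MeasureTheory
open scoped ENNReal Classical

/-- Relative entropy `Ent(ν|μ) := ∫ log(dν/dμ) dν ∈ [0,∞]` for probability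
measures, set to `∞` when `ν` is not absolutely continuous w.r.t. `μ` or the
integral is not finite. -/

noncomputable def relEnt {α : Type*} [MeasurableSpace α] (ν μ : Measure α) : ℝ≥0∞ :=
  if ν ≪ μ ∧ Integrable (llr ν μ) ν then ENNReal.ofReal (∫ x, llr ν μ x ∂ν) else ∞

open Real

/-- Gibbs' inequality: the relative entropy integral is nonnegative. -/
lemma relEnt_aux_gibbs {α : Type*} [MeasurableSpace α] (ν ρ : Measure α)
    [IsProbabilityMeasure ν] [IsProbabilityMeasure ρ]
    (hνρ : ν ≪ ρ) (h_int : Integrable (llr ν ρ) ν) :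
    0 ≤ ∫ x, llr ν ρ x ∂ν := by
  have h1 : (fun x ↦ exp (-llr ν ρ x)) =ᵐ[ν] fun x ↦ (ρ.rnDeriv ν x).toReal :=
    exp_neg_llr hνρ
  have hint2 : Integrable (fun x ↦ exp (-llr ν ρ x)) ν :=
    Measure.integrable_toReal_rnDeriv.congr h1.symm
  have hjensen : exp (∫ x, -llr ν ρ x ∂ν) ≤ ∫ x, exp (-llr ν ρ x) ∂ν := by
    refine convexOn_exp.map_integral_le Real.continuous_exp.continuousOn isClosed_univ
      (Filter.Eventually.of_forall fun x => Set.mem_univ _) h_int.neg ?_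
    exact hint2
  have h3 : ∫ x, exp (-llr ν ρ x) ∂ν = ∫ x, (ρ.rnDeriv ν x).toReal ∂ν :=
    integral_congr_ae h1
  have h4 : ∫ x, (ρ.rnDeriv ν x).toReal ∂ν ≤ 1 := by
    have := Measure.setIntegral_toReal_rnDeriv_le (μ := ρ) (ν := ν) (s := Set.univ)
      (measure_ne_top ρ _)
    simpa using this
  have h5 : exp (∫ x, -llr ν ρ x ∂ν) ≤ 1 := by
    calc exp (∫ x, -llr ν ρ x ∂ν) ≤ ∫ x, exp (-llr ν ρ x) ∂ν := hjensen
    _ ≤ 1 := h3 ▸ h4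
  rw [exp_le_one_iff, integral_neg, neg_nonpos] at h5
  exact h5

/-- Donsker–Varadhan inequality (one direction). -/
lemma relEnt_aux_dv {α : Type*} [MeasurableSpace α] (ν m : Measure α)
    [IsProbabilityMeasure ν] [IsProbabilityMeasure m]
    (hνm : ν ≪ m) (hllr : Integrable (llr ν m) ν) (f : α → ℝ)
    (hfν : Integrable f ν) (hfm : Integrable (fun x ↦ exp (f x)) m) :
    ∫ x, f x ∂ν ≤ ∫ x, llr ν m x ∂ν + log (∫ x, exp (f x) ∂m) := by
  haveI : IsProbabilityMeasure (m.tilted f) := isProbabilityMeasure_tilted hfm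
  have hνρ : ν ≪ m.tilted f := hνm.trans (absolutelyContinuous_tilted hfm)
  have h_int : Integrable (llr ν (m.tilted f)) ν :=
    integrable_llr_tilted_right hνm hfν hllr hfm
  have h_eq : ∫ x, llr ν (m.tilted f) x ∂ν
      = ∫ x, llr ν m x ∂ν - ∫ x, f x ∂ν + log (∫ x, exp (f x) ∂m) :=
    integral_llr_tilted_right hνm hfν hfm hllr
  have h0 : 0 ≤ ∫ x, llr ν (m.tilted f) x ∂ν := relEnt_aux_gibbs ν (m.tilted f) hνρ h_int
  linarith [h_eq ▸ h0]

/-- Entropy comparison through an intermediate measure: if `ν ≪ m ≪ μ` are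
probability measures and `g = dm/dμ` satisfies `∫ g dm < ∞`, then
`Ent(ν|μ) ≤ log ∫ g dm + 2 Ent(ν|m)`, where both sides may be `+∞`. -/
theorem relEnt_three_measure_bound
    {α : Type*} [MeasurableSpace α] (μ m ν : Measure α)
    [IsProbabilityMeasure μ] [IsProbabilityMeasure m] [IsProbabilityMeasure ν]
    (hνm : ν ≪ m) (hmμ : m ≪ μ)
    (g : α → ℝ) (hg : g = fun x => (m.rnDeriv μ x).toReal)
    (hgint : Integrable g m) :
    relEnt ν μ ≤ ENNReal.ofReal (Real.log (∫ x, g x ∂m)) + 2 * relEnt ν m := by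
  by_cases hcase : ν ≪ m ∧ Integrable (llr ν m) ν
  swap
  · have h : relEnt ν m = ⊤ := by rw [relEnt, if_neg hcase]
    rw [h]
    simp
  obtain ⟨-, hllr⟩ := hcase
  have hνμ : ν ≪ μ := hνm.trans hmμ
  set t : α → ℝ := fun x => (ν.rnDeriv m x).toReal with ht
  -- positivity facts
  have hg_pos_m : ∀ᵐ x ∂m, 0 < g x := by
    filter_upwards [Measure.rnDeriv_pos hmμ, hmμ.ae_le (Measure.rnDeriv_lt_top m μ)]
      with x h1 h2
    rw [hg]
    exact ENNReal.toReal_pos h1.ne' h2.ne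
  have hllrmμ : llr m μ = fun x => log (g x) := by rw [hg]; rfl
  -- decomposition llr ν μ = llr ν m + llr m μ  (ν-a.e.)
  have hdecomp : llr ν μ =ᵐ[ν] fun x => llr ν m x + llr m μ x := by
    filter_upwards [hνμ.ae_le (Measure.rnDeriv_mul_rnDeriv hνm),
      Measure.rnDeriv_pos hνm, hνm.ae_le (Measure.rnDeriv_lt_top ν m),
      hνm.ae_le (Measure.rnDeriv_pos hmμ), hνμ.ae_le (Measure.rnDeriv_lt_top m μ)]
      with x hmul h1p h1t h2p h2t
    have hx : (ν.rnDeriv m x * m.rnDeriv μ x).toReal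
        = (ν.rnDeriv m x).toReal * (m.rnDeriv μ x).toReal := ENNReal.toReal_mul
    rw [llr, llr, llr, ← hmul, Pi.mul_apply, hx, log_mul]
    · exact (ENNReal.toReal_pos h1p.ne' h1t.ne).ne'
    · exact (ENNReal.toReal_pos h2p.ne' h2t.ne).ne'
  -- Integrability of positive part of llr m μ w.r.t. ν
  have ht_meas : Measurable t := (Measure.measurable_rnDeriv ν m).ennreal_toReal
  have hP_meas : Measurable fun x => max (llr m μ x) 0 :=
    (measurable_llr m μ).max measurable_const
  have htP_int : Integrable (fun x => t x * max (llr m μ x) 0) m := by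
    have hmaj : Integrable (fun x => (g x + 1) + t x * llr ν m x) m := by
      refine ((hgint.add (integrable_const 1)).add ?_)
      have := (integrable_rnDeriv_smul_iff (f := llr ν m) hνm).mpr hllr
      simpa [smul_eq_mul] using this
    refine Integrable.mono' hmaj ((ht_meas.mul hP_meas).aestronglyMeasurable) ?_
    filter_upwards [hg_pos_m, Measure.rnDeriv_lt_top ν m] with x hgx htx
    have ht0 : 0 ≤ t x := ENNReal.toReal_nonneg
    have hP0 : 0 ≤ max (llr m μ x) 0 := le_max_right _ _
    rw [Real.norm_of_nonneg (mul_nonneg ht0 hP0)]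
    -- Fenchel–Young : t * s ≤ exp s + t * log t  (for t ≥ 0)
    have hFY : t x * max (llr m μ x) 0
        ≤ exp (max (llr m μ x) 0) + t x * log (t x) := by
      rcases eq_or_lt_of_le ht0 with h0 | h0
      · simp [← h0]
        positivity
      · have := Real.add_one_le_exp (max (llr m μ x) 0 - log (t x))
        have hexp : exp (max (llr m μ x) 0 - log (t x))
            = exp (max (llr m μ x) 0) / t x := by
          rw [Real.exp_sub, Real.exp_log h0]
        rw [hexp] at this
        have h2 : (max (llr m μ x) 0 - log (t x) + 1) * t x
            ≤ exp (max (llr m μ x) 0) / t x * t x := by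
          exact mul_le_mul_of_nonneg_right this ht0
        rw [div_mul_cancel₀ _ h0.ne'] at h2
        nlinarith [mul_le_mul_of_nonneg_right this ht0]
    have hlogt : log (t x) = llr ν m x := rfl
    have hexpP : exp (max (llr m μ x) 0) ≤ g x + 1 := by
      rcases le_or_gt (llr m μ x) 0 with h | h
      · rw [max_eq_right h]
        simp only [Real.exp_zero]
        linarith [hgx.le]
      · rw [max_eq_left h.le, hllrmμ]
        rw [Real.exp_log hgx]
        linarith
    calc t x * max (llr m μ x) 0 ≤ exp (max (llr m μ x) 0) + t x * log (t x) := hFY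
      _ ≤ (g x + 1) + t x * llr ν m x := by rw [hlogt]; linarith
  have hP_int : Integrable (fun x => max (llr m μ x) 0) ν := by
    have := (integrable_rnDeriv_smul_iff (f := fun x => max (llr m μ x) 0) hνm).mp
    apply this
    simpa [smul_eq_mul] using htP_int
  -- Integrability of negative part of llr ν μ w.r.t. ν
  have hQ_int : Integrable (fun x => max (-llr ν μ x) 0) ν := by
    refine (integrable_rnDeriv_smul_iff (f := fun x => max (-llr ν μ x) 0) hνμ).mp ?_
    simp only [smul_eq_mul]
    refine Integrable.mono' (integrable_const 1)
      (((Measure.measurable_rnDeriv ν μ).ennreal_toReal.mul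
        ((measurable_llr ν μ).neg.max measurable_const)).aestronglyMeasurable) ?_
    refine Filter.Eventually.of_forall fun x => ?_
    set u := ((ν.rnDeriv μ) x).toReal with hu
    have hu0 : 0 ≤ u := ENNReal.toReal_nonneg
    have hQ0 : (0:ℝ) ≤ max (-llr ν μ x) 0 := le_max_right _ _
    rw [Real.norm_of_nonneg (mul_nonneg hu0 hQ0)]
    rcases eq_or_lt_of_le hu0 with h0 | h0
    · simp [← h0]
    · rcases le_or_gt (1:ℝ) u with h1 | h1
      · have : llr ν μ x = log u := rfl
        have hlog0 : 0 ≤ llr ν μ x := by rw [this]; exact Real.log_nonneg h1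
        rw [max_eq_right (by linarith)]
        simp
      · have hQle : max (-llr ν μ x) 0 ≤ u⁻¹ := by
          have hlog : -llr ν μ x = log u⁻¹ := by
            show -log u = _
            rw [Real.log_inv]
          have := Real.log_le_sub_one_of_pos (inv_pos.mpr h0)
          have hupos : (0:ℝ) < u⁻¹ := inv_pos.mpr h0
          refine max_le ?_ hupos.le
          rw [hlog]
          linarith
        calc u * max (-llr ν μ x) 0 ≤ u * u⁻¹ := by
              exact mul_le_mul_of_nonneg_left hQle hu0
          _ = 1 := mul_inv_cancel₀ h0.ne'
  -- Integrability of negative part of llr m μ w.r.t. ν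
  have hN_int : Integrable (fun x => max (-llr m μ x) 0) ν := by
    refine Integrable.mono' (hllr.pos_part.add hQ_int)
      (((measurable_llr m μ).neg.max measurable_const).aestronglyMeasurable) ?_
    filter_upwards [hdecomp] with x hx
    have : -llr m μ x = llr ν m x + (-llr ν μ x) := by rw [hx]; ring
    rw [Real.norm_of_nonneg (le_max_right _ _), this]
    calc max (llr ν m x + -llr ν μ x) 0 ≤ max (llr ν m x) 0 + max (-llr ν μ x) 0 := by
          rcases le_or_gt (llr ν m x + -llr ν μ x) 0 with h | h
          · rw [max_eq_right h]; positivity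
          · rw [max_eq_left h.le]
            have := le_max_left (llr ν m x) 0
            have := le_max_left (-llr ν μ x) 0
            linarith
      _ = _ := rfl
  -- Integrability of llr m μ w.r.t. ν
  have hlog_int : Integrable (llr m μ) ν := by
    have : llr m μ = fun x => max (llr m μ x) 0 - max (-llr m μ x) 0 := by
      funext x
      rw [max_zero_sub_max_neg_zero_eq_self]
    rw [this]
    exact hP_int.sub hN_int
  -- Integrability of llr ν μ w.r.t. ν
  have hint : Integrable (llr ν μ) ν := (hllr.add hlog_int).congr hdecomp.symm
  -- Integral decomposition
  have hsum : ∫ x, llr ν μ x ∂ν = ∫ x, llr ν m x ∂ν + ∫ x, llr m μ x ∂ν := by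
    rw [integral_congr_ae hdecomp, integral_add hllr hlog_int]
  -- exp (llr m μ) = g  m-a.e.
  have hexp_eq : (fun x ↦ exp (llr m μ x)) =ᵐ[m] g := by
    have := exp_llr_of_ac m μ hmμ
    filter_upwards [this] with x hx
    rw [hx, hg]
  have hexp_int : Integrable (fun x ↦ exp (llr m μ x)) m := hgint.congr hexp_eq.symm
  have hIeq : ∫ x, exp (llr m μ x) ∂m = ∫ x, g x ∂m := integral_congr_ae hexp_eq
  -- Donsker–Varadhan
  have hdv : ∫ x, llr m μ x ∂ν ≤ ∫ x, llr ν m x ∂ν + log (∫ x, g x ∂m) := by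
    have := relEnt_aux_dv ν m hνm hllr (llr m μ) hlog_int hexp_int
    rwa [hIeq] at this
  -- real inequality
  have hreal : ∫ x, llr ν μ x ∂ν ≤ log (∫ x, g x ∂m) + 2 * ∫ x, llr ν m x ∂ν := by
    rw [hsum]; linarith
  -- wrap up in ℝ≥0∞
  rw [relEnt, relEnt, if_pos ⟨hνμ, hint⟩, if_pos ⟨hνm, hllr⟩]
  calc ENNReal.ofReal (∫ x, llr ν μ x ∂ν)
      ≤ ENNReal.ofReal (log (∫ x, g x ∂m) + 2 * ∫ x, llr ν m x ∂ν) :=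
        ENNReal.ofReal_le_ofReal hreal
    _ ≤ ENNReal.ofReal (log (∫ x, g x ∂m)) + ENNReal.ofReal (2 * ∫ x, llr ν m x ∂ν) :=
        ENNReal.ofReal_add_le
    _ = ENNReal.ofReal (log (∫ x, g x ∂m)) + 2 * ENNReal.ofReal (∫ x, llr ν m x ∂ν) := by
        rw [ENNReal.ofReal_mul (by norm_num : (0:ℝ) ≤ 2)]
        norm_num
end
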